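/- arXiv:2209.13798 — 6 statements merged into one kernel-verified Lean document; each statement's English description precedes it below -/
import Mathlib

section
/- Let d > 1 be an integer and A a d-collection with a_i > 2(d−1) for some index i. Then span_d(A) = span_d(e_i(A)). -/
/-- The span of a `d`-collection `A : ℕ →₀ ℕ` (where `A i` is the multiplicity of the
token `d ^ i`): the set of all sums `∑ i, c i * d ^ i` over sub-collections `c ≤ A`. -/
def dspan (d : ℕ) (A : ℕ →₀ ℕ) : Set ℕ :=
  {n : ℕ | ∃ c : ℕ →₀ ℕ, (∀ i, c i ≤ A i) ∧ n = c.sum (fun i m => m * d ^ i)}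

/-- The total sum `∑ i, a_i * d ^ i` of a `d`-collection. -/
def dsum (d : ℕ) (A : ℕ →₀ ℕ) : ℕ := A.sum (fun i m => m * d ^ i)

/-- Elementary exchange at index `i`: replace `d` tokens `d ^ i` by one token `d ^ (i+1)`. -/
noncomputable def exch (d i : ℕ) (A : ℕ →₀ ℕ) : ℕ →₀ ℕ :=
  A - Finsupp.single i d + Finsupp.single (i + 1) 1

lemma sum_f_add_single (d : ℕ) (c : ℕ →₀ ℕ) (j m : ℕ) :
    (c + Finsupp.single j m).sum (fun i k => k * d ^ i)
      = c.sum (fun i k => k * d ^ i) + m * d ^ j := by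
  rw [Finsupp.sum_add_index' (h := fun i k => k * d ^ i) (fun _ => zero_mul _)
    (fun _ _ _ => add_mul _ _ _), Finsupp.sum_single_index (h := fun i k => k * d ^ i) (zero_mul _)]

lemma sum_f_sub_single (d : ℕ) (c : ℕ →₀ ℕ) (j m : ℕ) (h : m ≤ c j) :
    (c - Finsupp.single j m).sum (fun i k => k * d ^ i) + m * d ^ j
      = c.sum (fun i k => k * d ^ i) := by
  rw [← sum_f_add_single, tsub_add_cancel_of_le (Finsupp.single_le_iff.mpr h)]

lemma exch_apply (d i : ℕ) (A : ℕ →₀ ℕ) (j : ℕ) :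
    exch d i A j = A j - (if i = j then d else 0) + (if i + 1 = j then 1 else 0) := by
  simp [exch, Finsupp.single_apply]

/-- A proper elementary exchange (at an index with entry `> 2(d-1)`) preserves the span. -/
theorem stmt_2 (d : ℕ) (hd : 1 < d) (A : ℕ →₀ ℕ) (i : ℕ) (hi : 2 * (d - 1) < A i) :
    dspan d A = dspan d (exch d i A) := by
  have hdi : d ≤ A i := by omega
  ext n
  simp only [dspan, Set.mem_setOf_eq]
  constructor
  · rintro ⟨c, hc, rfl⟩
    by_cases h : c i ≤ A i - d
    · refine ⟨c, fun j => ?_, rfl⟩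
      rw [exch_apply]
      have := hc j
      split_ifs <;> subst_vars <;> omega
    · have hdc : d ≤ c i := by have := hc i; omega
      refine ⟨c - Finsupp.single i d + Finsupp.single (i + 1) 1, fun j => ?_, ?_⟩
      · rw [exch_apply]
        have := hc j
        simp only [Finsupp.add_apply, Finsupp.tsub_apply, Finsupp.single_apply]
        split_ifs <;> subst_vars <;> omega
      · rw [sum_f_add_single, ← sum_f_sub_single d c i d hdc]
        have : (1 : ℕ) * d ^ (i + 1) = d * d ^ i := by ring
        omega
  · rintro ⟨c, hc, rfl⟩
    have hci : c i ≤ A i - d := by have := hc i; rw [exch_apply] at this; simp at this; omega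
    by_cases h : c (i + 1) ≤ A (i + 1)
    · refine ⟨c, fun j => ?_, rfl⟩
      have := hc j
      rw [exch_apply] at this
      split_ifs at this <;> subst_vars <;> omega
    · have h1 : 1 ≤ c (i + 1) := by omega
      refine ⟨c - Finsupp.single (i + 1) 1 + Finsupp.single i d, fun j => ?_, ?_⟩
      · have := hc j
        rw [exch_apply] at this
        simp only [Finsupp.add_apply, Finsupp.tsub_apply, Finsupp.single_apply]
        split_ifs at this ⊢ <;> subst_vars <;> omega
      · rw [sum_f_add_single, ← sum_f_sub_single d c (i + 1) 1 h1]
        have : (1 : ℕ) * d ^ (i + 1) = d * d ^ i := by ring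
        omega
end

section
/- Let d > 1 be an integer and suppose the d-collection B is obtained from the d-collection A by a finite sequence of proper elementary exchanges (i.e., each step applies some e_i at an index whose current entry exceeds 2(d−1)). Then span_d(A) = span_d(B). -/
lemma dsum_add (d : ℕ) (a b : ℕ →₀ ℕ) : dsum d (a + b) = dsum d a + dsum d b :=
  Finsupp.sum_add_index' (fun i => zero_mul _) (fun i m n => add_mul m n _)

lemma dsum_single (d j m : ℕ) : dsum d (Finsupp.single j m) = m * d ^ j :=
  Finsupp.sum_single_index (zero_mul _)

lemma dsum_exch (d i : ℕ) (c : ℕ →₀ ℕ) (h : d ≤ c i) :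
    dsum d (exch d i c) = dsum d c := by
  have hle : Finsupp.single i d ≤ c := Finsupp.single_le_iff.mpr h
  have h1 : (c - Finsupp.single i d) + Finsupp.single i d = c := tsub_add_cancel_of_le hle
  have : dsum d (exch d i c)
      = dsum d (c - Finsupp.single i d) + 1 * d ^ (i + 1) := by
    rw [exch, dsum_add, dsum_single]
  rw [this]
  conv_rhs => rw [← h1, dsum_add, dsum_single]
  rw [pow_succ]; ring

lemma dspan_exch (d : ℕ) (hd : 1 < d) (A : ℕ →₀ ℕ) (i : ℕ) (hA : 2 * (d - 1) < A i) :
    dspan d (exch d i A) = dspan d A := by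
  have hdA : d ≤ A i := by omega
  ext n
  constructor
  · rintro ⟨c, hc, rfl⟩
    have hci : c i ≤ A i - d := by
      have := hc i; rw [exch_apply] at this; simp at this; omega
    have hci1 : c (i + 1) ≤ A (i + 1) + 1 := by
      have := hc (i + 1); rw [exch_apply] at this; simp at this; omega
    by_cases h : c (i + 1) ≤ A (i + 1)
    · refine ⟨c, fun j => ?_, rfl⟩
      by_cases hj : j = i + 1
      · subst hj; exact h
      · have := hc j; rw [exch_apply] at this; split_ifs at this <;> omega
    · have hc1 : c (i + 1) = A (i + 1) + 1 := by omega
      set c' := c - Finsupp.single (i + 1) 1 + Finsupp.single i d with hc'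
      have hle1 : Finsupp.single (i + 1) 1 ≤ c := Finsupp.single_le_iff.mpr (by omega)
      have hexch : exch d i c' = c := by
        rw [hc', exch, add_tsub_cancel_right, tsub_add_cancel_of_le hle1]
      have hc'app : ∀ j, c' j = c j - (if i + 1 = j then 1 else 0)
          + (if i = j then d else 0) := by
        intro j
        simp [hc', Finsupp.tsub_apply, Finsupp.add_apply, Finsupp.single_apply]
      have hc'i : d ≤ c' i := by rw [hc'app]; simp
      refine ⟨c', fun j => ?_, ?_⟩
      · rw [hc'app]
        by_cases hj1 : j = i
        · subst hj1; simp; omega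
        · by_cases hj2 : j = i + 1
          · subst hj2; split_ifs <;> omega
          · have := hc j; rw [exch_apply] at this; split_ifs <;> split_ifs at this <;> omega
      · have := dsum_exch d i c' hc'i
        rw [hexch] at this
        show dsum d c = dsum d c'
        exact this
  · rintro ⟨c, hc, rfl⟩
    by_cases h : c i ≤ A i - d
    · refine ⟨c, fun j => ?_, rfl⟩
      rw [exch_apply]
      by_cases hj1 : i = j
      · subst hj1; simp; omega
      · have := hc j; split_ifs <;> omega
    · have hci : d ≤ c i := by omega
      refine ⟨exch d i c, fun j => ?_, (dsum_exch d i c hci).symm⟩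
      rw [exch_apply, exch_apply]
      have := hc j
      have := hc i
      split_ifs <;> omega

/-- A finite sequence of proper elementary exchanges preserves the span. -/
theorem stmt_3 (d : ℕ) (hd : 1 < d) (A B : ℕ →₀ ℕ)
    (h : Relation.ReflTransGen
      (fun X Y : ℕ →₀ ℕ => ∃ i, 2 * (d - 1) < X i ∧ Y = exch d i X) A B) :
    dspan d A = dspan d B := by
  induction h with
  | refl => rfl
  | tail _ step ih =>
    obtain ⟨i, hi, rfl⟩ := step
    rw [ih, dspan_exch d hd _ i hi]
end

section
/- Let d > 1 be an integer and let A = (a_0, …, a_k) be a j-normal d-collection, i.e., d − 1 ≤ a_i ≤ 2(d−1) for all i < j and a_j < d − 1. Set X = 1 + Σ_{i=0}^{j} a_i·d^i. Then X < d^{j+1}, every natural number strictly less than X belongs to span_d(A), and X does not belong to span_d(A); in particular X is the smallest natural number not in span_d(A). -/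
/-! If every multiplicity below index `m` is at least `d - 1`, the tokens `d ^ i` with `i < m`
realise every number up to `d ^ m - 1`; so adding the tokens `d ^ m` leaves no gap, and greedily
the span contains every number up to `∑_{i ≤ j} a_i d ^ i`. The upper bounds on the `a_i` give
`X < d ^ (j + 1)`, so a representation of `X` can use no token of index above `j`, while the
tokens of index at most `j` only add up to `X - 1`. -/

open Finset

lemma pred_mul_geom_sum_add_one {d : ℕ} (hd : 0 < d) (n : ℕ) :
    (d - 1) * ∑ i ∈ range n, d ^ i + 1 = d ^ n := by
  have h := geom_sum_mul_add (d - 1) n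
  rwa [Nat.sub_one_add_one hd.ne', mul_comm] at h

lemma pow_le_sum_range_mul_pow_add_one {d : ℕ} (hd : 0 < d) {a : ℕ → ℕ} {m : ℕ}
    (ha : ∀ i < m, d - 1 ≤ a i) : d ^ m ≤ ∑ i ∈ range m, a i * d ^ i + 1 := by
  rw [← pred_mul_geom_sum_add_one hd, mul_sum]
  gcongr with i hi
  exact ha i (mem_range.mp hi)

lemma one_add_sum_range_mul_pow_lt_pow {d : ℕ} {a : ℕ → ℕ} {j : ℕ}
    (ha : ∀ i < j, a i ≤ 2 * (d - 1)) (hj : a j < d - 1) :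
    1 + ∑ i ∈ range (j + 1), a i * d ^ i < d ^ (j + 1) := by
  have hgeom := pred_mul_geom_sum_add_one (d := d) (by omega) j
  have hlow : ∑ i ∈ range j, a i * d ^ i ≤ 2 * ((d - 1) * ∑ i ∈ range j, d ^ i) := by
    rw [mul_sum, mul_sum]
    refine sum_le_sum fun i hi => ?_
    exact (Nat.mul_le_mul_right _ (ha i (mem_range.mp hi))).trans_eq (mul_assoc _ _ _)
  have htop : a j * d ^ j + 2 * d ^ j ≤ d ^ (j + 1) := by
    rw [← add_mul, pow_succ']
    gcongr
    omega
  rw [sum_range_succ]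
  omega

lemma exists_le_mul_le_and_sub_mul_le {n M D a : ℕ} (hD : D ≤ M + 1) (hn : n ≤ M + a * D) :
    ∃ t ≤ a, t * D ≤ n ∧ n - t * D ≤ M := by
  refine ⟨min a (n / D), min_le_left _ _,
    (Nat.mul_le_mul_right _ (min_le_right _ _)).trans (Nat.div_mul_le_self n D), ?_⟩
  rcases le_total a (n / D) with h | h
  · rw [min_eq_left h]
    omega
  · rw [min_eq_right h]
    rcases Nat.eq_zero_or_pos D with rfl | hDpos
    · simpa using hn
    · have := Nat.mod_add_div' n D
      have := Nat.mod_lt n hDpos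
      omega

lemma add_mul_pow_mem_dspan {d i t m : ℕ} {A : ℕ →₀ ℕ} (hm : m ∈ dspan d (A.erase i))
    (ht : t ≤ A i) : m + t * d ^ i ∈ dspan d A := by
  obtain ⟨c, hc, rfl⟩ := hm
  refine ⟨c + Finsupp.single i t, fun k => ?_, ?_⟩
  · rcases eq_or_ne k i with rfl | hk
    · have hck : c k = 0 := by simpa using hc k
      simpa [hck] using ht
    · simpa [hk] using hc k
  · rw [Finsupp.sum_add_index' (by simp) (fun _ _ _ => add_mul _ _ _),
      Finsupp.sum_single_index (zero_mul _)]

lemma mem_dspan_of_le_sum_range {d m n : ℕ} {A : ℕ →₀ ℕ} (hd : 0 < d)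
    (hA : ∀ i, i + 1 < m → d - 1 ≤ A i) (hn : n ≤ ∑ i ∈ range m, A i * d ^ i) :
    n ∈ dspan d A := by
  induction m generalizing A n with
  | zero => exact ⟨0, fun _ => Nat.zero_le _, by simpa using hn⟩
  | succ m ih =>
    have hsum : ∑ i ∈ range m, (A.erase m) i * d ^ i = ∑ i ∈ range m, A i * d ^ i :=
      sum_congr rfl fun i hi => by rw [Finsupp.erase_ne (mem_range.mp hi).ne]
    have hD := pow_le_sum_range_mul_pow_add_one hd (m := m) (a := A) fun i hi => hA i (by omega)
    rw [sum_range_succ] at hn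
    obtain ⟨t, ht, htn, hrest⟩ := exists_le_mul_le_and_sub_mul_le hD hn
    have hmem : n - t * d ^ m ∈ dspan d (A.erase m) :=
      ih (fun i hi => by rw [Finsupp.erase_ne (by omega)]; exact hA i (by omega))
        (hsum.symm ▸ hrest)
    simpa [Nat.sub_add_cancel htn] using add_mul_pow_mem_dspan hmem ht

lemma le_sum_range_of_mem_dspan_of_lt_pow {d j n : ℕ} {A : ℕ →₀ ℕ} (hn : n ∈ dspan d A)
    (hlt : n < d ^ (j + 1)) : n ≤ ∑ i ∈ range (j + 1), A i * d ^ i := by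
  obtain ⟨c, hc, rfl⟩ := hn
  have hd : 1 ≤ d := Nat.pos_of_ne_zero (by rintro rfl; simp at hlt)
  have hsupp : c.support ⊆ range (j + 1) := by
    intro i hi
    by_contra hij
    have hterm : c i * d ^ i ≤ c.sum (fun i m => m * d ^ i) := by
      simpa [Finsupp.sum_single_index] using
        Finsupp.single_le_sum c (g := fun i m => m * d ^ i) (fun _ _ => Nat.zero_le _) i
    have : d ^ (j + 1) ≤ c i * d ^ i :=
      (pow_le_pow_right₀ hd (by simpa using hij)).trans
        (Nat.le_mul_of_pos_left _ (Nat.pos_of_ne_zero (Finsupp.mem_support_iff.mp hi)))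
    omega
  rw [Finsupp.sum_of_support_subset c hsupp (fun i m => m * d ^ i) (fun _ _ => zero_mul _)]
  gcongr with i
  exact hc i

/-- For a `j`-normal `d`-collection, `X = 1 + ∑_{i ≤ j} a_i d^i` satisfies `X < d^(j+1)`,
every natural number below `X` is in the span, and `X` itself is not:
`X` is the smallest natural number not in the span. -/
theorem stmt_6 (d : ℕ) (hd : 1 < d) (A : ℕ →₀ ℕ) (j : ℕ)
    (hnorm : ∀ i < j, d - 1 ≤ A i ∧ A i ≤ 2 * (d - 1)) (hj : A j < d - 1) :
    (1 + ∑ i ∈ Finset.range (j + 1), A i * d ^ i) < d ^ (j + 1) ∧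
    (∀ n < 1 + ∑ i ∈ Finset.range (j + 1), A i * d ^ i, n ∈ dspan d A) ∧
    (1 + ∑ i ∈ Finset.range (j + 1), A i * d ^ i) ∉ dspan d A := by
  have hX := one_add_sum_range_mul_pow_lt_pow (fun i hi => (hnorm i hi).2) hj
  refine ⟨hX, fun n hn => ?_, fun hmem => ?_⟩
  · exact mem_dspan_of_le_sum_range (m := j + 1) (by omega)
      (fun i hi => (hnorm i (by omega)).1) (by omega)
  · have := le_sum_range_of_mem_dspan_of_lt_pow hmem hX
    omega
end

section
/- Let d > 1 be an integer and A = (a_0, …, a_k) a normal d-collection with critical indices j_1 < … < j_s = k (an index j ≤ k is critical if j = k or a_j < d − 1; set j_0 = −1), and let A_i consist of the entries a_t with j_{i−1} < t ≤ j_i. Then for every i < s, sum_d(A_i) ≤ d^{j_i + 1} − d^{j_{i−1}+1}. -/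
/-!
Every entry of a normal collection is at most `2(d-1)`, so a block of such entries on
`[m, p)` sums to at most `2(d^p - d^m)`. A non-last part ends at a critical index `p < k`,
whose entry is at most `d - 2`; hence the part sums to at most
`2(d^p - d^m) + (d-2)d^p = d^(p+1) - 2d^m`.
-/

open Finset

lemma sum_Ico_mul_pow_add_two_mul_pow_le {d m n : ℕ} (a : ℕ → ℕ) (hd : 0 < d) (hmn : m ≤ n)
    (ha : ∀ t ∈ Ico m n, a t ≤ 2 * (d - 1)) :
    ∑ t ∈ Ico m n, a t * d ^ t + 2 * d ^ m ≤ 2 * d ^ n := by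
  induction n, hmn using Nat.le_induction with
  | base => simp
  | succ n hmn ih =>
    have han : a n * d ^ n ≤ 2 * (d - 1) * d ^ n :=
      Nat.mul_le_mul_right _ (ha n (by simp [hmn]))
    have hstep : 2 * d ^ n + 2 * (d - 1) * d ^ n = 2 * d ^ (n + 1) := by
      obtain ⟨e, rfl⟩ : ∃ e, d = e + 1 := ⟨d - 1, by omega⟩
      simp only [add_tsub_cancel_right, pow_succ]
      ring
    have := ih fun t ht => ha t (Ico_subset_Ico_right n.le_succ ht)
    rw [sum_Ico_succ_top hmn]
    omega

lemma sum_Ico_succ_mul_pow_le_pow_sub_pow {d m p : ℕ} (a : ℕ → ℕ) (hd : 1 < d) (hmp : m ≤ p)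
    (ha : ∀ t ∈ Ico m p, a t ≤ 2 * (d - 1)) (hap : a p < d - 1) :
    ∑ t ∈ Ico m (p + 1), a t * d ^ t ≤ d ^ (p + 1) - d ^ m := by
  have hblock := sum_Ico_mul_pow_add_two_mul_pow_le a (by omega) hmp ha
  have hlast : a p * d ^ p ≤ (d - 2) * d ^ p := Nat.mul_le_mul_right _ (by omega)
  have htop : (d - 2) * d ^ p + 2 * d ^ p = d ^ (p + 1) := by
    rw [← add_mul, Nat.sub_add_cancel hd, pow_succ, mul_comm]
  rw [sum_Ico_succ_top hmp]
  omega

lemma dsum_filter_Ico (d m n : ℕ) (A : ℕ →₀ ℕ) :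
    dsum d (A.filter (fun t => m ≤ t ∧ t < n)) = ∑ t ∈ Ico m n, A t * d ^ t := by
  classical
  have hsupp : (A.filter (fun t => m ≤ t ∧ t < n)).support ⊆ Ico m n := fun t ht => by
    rw [Finsupp.support_filter, mem_filter] at ht
    exact mem_Ico.mpr ht.2
  rw [dsum, Finsupp.sum_of_support_subset _ hsupp (fun t c => c * d ^ t) fun _ _ => zero_mul _]
  refine sum_congr rfl fun t ht => ?_
  rw [Finsupp.filter_apply, if_pos (mem_Ico.mp ht)]

theorem stmt_8_general (d : ℕ) (hd : 1 < d) (A : ℕ →₀ ℕ) (k : ℕ)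
    (hnorm : ∀ t, A t ≤ 2 * (d - 1))
    (s : ℕ) (b : ℕ → ℕ)
    (hbmono : ∀ i < s, b i < b (i + 1)) (hbs : b s = k + 1)
    (hcrit : ∀ t ≤ k, ((t = k ∨ A t < d - 1) ↔ ∃ i, 0 < i ∧ i ≤ s ∧ b i = t + 1)) :
    ∀ i, i + 1 < s →
      dsum d (A.filter (fun t => b i ≤ t ∧ t < b (i + 1))) ≤
        d ^ (b (i + 1)) - d ^ (b i) := by
  intro i hi
  have hstep : b i < b (i + 1) := hbmono i (by omega)
  have hb : StrictMonoOn b (Set.Iic s) := strictMonoOn_Iic_of_lt_succ hbmono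
  have hlt : b (i + 1) < b s := hb (Set.mem_Iic.mpr hi.le) (Set.mem_Iic.mpr le_rfl) hi
  obtain ⟨p, hp⟩ : ∃ p, b (i + 1) = p + 1 := ⟨b (i + 1) - 1, by omega⟩
  have hAp : A p < d - 1 := by
    obtain h | h := (hcrit p (by omega)).mpr ⟨i + 1, by omega, hi.le, hp⟩
    · omega
    · exact h
  rw [dsum_filter_Ico, hp]
  exact sum_Ico_succ_mul_pow_le_pow_sub_pow A hd (by omega)
    (fun t _ => hnorm t) hAp

/-- With the setup of the decomposition of a normal `d`-collection along its critical
indices (boundaries `b 0 = 0 < b 1 < … < b s = k + 1`, `b i = j_i + 1` with `j_0 = -1`;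
parts indexed `0 ≤ i < s`), every non-last part satisfies
`sum_d(A_i) ≤ d ^ (j_{i+1} + 1) - d ^ (j_i + 1)`. -/
theorem stmt_8 (d : ℕ) (hd : 1 < d) (A : ℕ →₀ ℕ) (k : ℕ)
    (hk : A k ≠ 0) (hsupp : ∀ t, A t ≠ 0 → t ≤ k)
    (hnorm : ∀ t, A t ≤ 2 * (d - 1))
    (s : ℕ) (hs : 0 < s) (b : ℕ → ℕ)
    (hb0 : b 0 = 0) (hbmono : ∀ i < s, b i < b (i + 1)) (hbs : b s = k + 1)
    (hcrit : ∀ t ≤ k, ((t = k ∨ A t < d - 1) ↔ ∃ i, 0 < i ∧ i ≤ s ∧ b i = t + 1)) :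
    ∀ i, i + 1 < s →
      dsum d (A.filter (fun t => b i ≤ t ∧ t < b (i + 1))) ≤
        d ^ (b (i + 1)) - d ^ (b i) :=
  stmt_8_general d hd A k hnorm s b hbmono hbs hcrit
end

section
/- Let d > 1 be an integer and let A = (a_0, …, a_k) and B = (b_0, …, b_l) be two irreducible d-collections, i.e., normal d-collections (all entries ≤ 2(d−1), top entries a_k ≠ 0 and b_l ≠ 0) such that a_i ≥ d − 1 for all i < k and b_i ≥ d − 1 for all i < l. If A ≠ B, then sum_d(A) ≠ sum_d(B). -/
lemma peel_sum (d : ℕ) (a : ℕ → ℕ) (n : ℕ) :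
    ∑ i ∈ Finset.range (n+1), a i * d^i
      = a 0 + d * ∑ i ∈ Finset.range n, a (i+1) * d^i := by
  rw [Finset.sum_range_succ', Finset.mul_sum, add_comm]
  simp only [pow_zero, mul_one, pow_succ]
  congr 1
  apply Finset.sum_congr rfl; intro i _; ring

lemma arith_split (d u v a0 b0 : ℕ) (hd : 1 < d)
    (ha : d - 1 ≤ a0) (ha' : a0 ≤ 2*(d-1)) (hb : d-1 ≤ b0) (hb' : b0 ≤ 2*(d-1))
    (h : a0 + d*u = b0 + d*v) : u = v ∧ a0 = b0 := by
  rcases Nat.lt_trichotomy u v with h1 | h1 | h1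
  · exfalso
    have h2 : d*u + d ≤ d*v := by
      calc d*u + d = d*(u+1) := by ring
        _ ≤ d*v := Nat.mul_le_mul_left d h1
    revert h h2
    generalize d*u = x
    generalize d*v = y
    intro h h2
    omega
  · subst h1; omega
  · exfalso
    have h2 : d*v + d ≤ d*u := by
      calc d*v + d = d*(v+1) := by ring
        _ ≤ d*u := Nat.mul_le_mul_left d h1
    revert h h2
    generalize d*u = x
    generalize d*v = y
    intro h h2
    omega

lemma lower_bound (d : ℕ) (hd : 1 < d) (b : ℕ → ℕ) (l : ℕ) (hl : 0 < l)
    (hbl : b l ≠ 0) (hb0 : d - 1 ≤ b 0) :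
    2*(d-1) < ∑ i ∈ Finset.range (l+1), b i * d^i := by
  have hl1 : l - 1 + 1 = l := by omega
  have h1 : b l * d^l ≤ ∑ i ∈ Finset.range l, b (i+1) * d^i * d := by
    have hmem : l - 1 ∈ Finset.range l := by simp; omega
    have heq : b l * d^l = b ((l-1)+1) * d^(l-1) * d := by
      calc b l * d^l = b l * d^(l-1+1) := by rw [hl1]
        _ = b ((l-1)+1) * d^(l-1) * d := by rw [pow_succ, hl1]; ring
    rw [heq]
    exact Finset.single_le_sum (f := fun i => b (i+1) * d^i * d) (fun i _ => Nat.zero_le _) hmem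
  have h2 : d ≤ b l * d^l := by
    calc d = 1 * d^1 := by ring
      _ ≤ b l * d^l := Nat.mul_le_mul (by omega) (Nat.pow_le_pow_right (by omega) hl)
  rw [peel_sum]
  have h3 : d * ∑ i ∈ Finset.range l, b (i+1) * d^i
      = ∑ i ∈ Finset.range l, b (i+1) * d^i * d := by
    rw [Finset.mul_sum]; apply Finset.sum_congr rfl; intro i _; ring
  omega

lemma key (d : ℕ) (hd : 1 < d) : ∀ k l (a b : ℕ → ℕ), a k ≠ 0 → b l ≠ 0 →
    (∀ i, a i ≤ 2*(d-1)) → (∀ i < k, d-1 ≤ a i) →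
    (∀ i, b i ≤ 2*(d-1)) → (∀ i < l, d-1 ≤ b i) →
    (∑ i ∈ Finset.range (k+1), a i * d^i) = (∑ i ∈ Finset.range (l+1), b i * d^i) →
    k = l ∧ ∀ i ≤ k, a i = b i := by
  intro k
  induction k with
  | zero =>
    intro l a b hak hbl hanorm hairr hbnorm hbirr hsum
    rcases Nat.eq_zero_or_pos l with hl | hl
    · subst hl
      rw [Finset.sum_range_one, Finset.sum_range_one] at hsum
      simp only [pow_zero, mul_one] at hsum
      exact ⟨rfl, fun i hi => by obtain rfl : i = 0 := Nat.le_zero.mp hi; omega⟩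
    · exfalso
      have hlb := lower_bound d hd b l hl hbl (hbirr 0 hl)
      rw [Finset.sum_range_one] at hsum
      simp only [pow_zero, mul_one] at hsum
      have := hanorm 0
      omega
  | succ k ih =>
    intro l a b hak hbl hanorm hairr hbnorm hbirr hsum
    rcases Nat.eq_zero_or_pos l with hl | hl
    · exfalso
      subst hl
      have hlb := lower_bound d hd a (k+1) (Nat.succ_pos k) hak (hairr 0 (Nat.succ_pos k))
      rw [Finset.sum_range_one] at hsum
      simp only [pow_zero, mul_one] at hsum
      have := hbnorm 0
      omega
    · obtain ⟨l', rfl⟩ : ∃ l', l = l' + 1 := ⟨l - 1, by omega⟩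
      rw [peel_sum d a (k+1), peel_sum d b (l'+1)] at hsum
      obtain ⟨heq, h00⟩ := arith_split d (∑ i ∈ Finset.range (k+1), a (i+1) * d^i)
        (∑ i ∈ Finset.range (l'+1), b (i+1) * d^i) (a 0) (b 0) hd
        (hairr 0 (Nat.succ_pos k)) (hanorm 0) (hbirr 0 (Nat.succ_pos l')) (hbnorm 0) hsum
      obtain ⟨hkl, hab⟩ := ih l' (fun i => a (i+1)) (fun i => b (i+1)) hak hbl
        (fun i => hanorm (i+1)) (fun i hi => hairr (i+1) (by omega))
        (fun i => hbnorm (i+1)) (fun i hi => hbirr (i+1) (by omega)) heq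
      refine ⟨by omega, fun i hi => ?_⟩
      rcases Nat.eq_zero_or_pos i with h | h
      · subst h; exact h00
      · obtain ⟨j, rfl⟩ : ∃ j, i = j + 1 := ⟨i - 1, by omega⟩
        exact hab j (by omega)

lemma dsum_eq_range (d : ℕ) (A : ℕ →₀ ℕ) (k : ℕ) (hsupp : ∀ i, A i ≠ 0 → i ≤ k) :
    dsum d A = ∑ i ∈ Finset.range (k+1), A i * d^i := by
  unfold dsum
  apply Finsupp.sum_of_support_subset
  · intro i hi
    simp only [Finset.mem_range]
    have := hsupp i (Finsupp.mem_support_iff.mp hi)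
    omega
  · intro i _; simp

/-- Two distinct irreducible `d`-collections have distinct sums. -/
theorem stmt_9 (d : ℕ) (hd : 1 < d) (A B : ℕ →₀ ℕ) (k l : ℕ)
    (hAk : A k ≠ 0) (hAsupp : ∀ i, A i ≠ 0 → i ≤ k)
    (hAnorm : ∀ i, A i ≤ 2 * (d - 1)) (hAirr : ∀ i < k, d - 1 ≤ A i)
    (hBl : B l ≠ 0) (hBsupp : ∀ i, B i ≠ 0 → i ≤ l)
    (hBnorm : ∀ i, B i ≤ 2 * (d - 1)) (hBirr : ∀ i < l, d - 1 ≤ B i)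
    (hne : A ≠ B) : dsum d A ≠ dsum d B := by
  intro hsum
  apply hne
  rw [dsum_eq_range d A k hAsupp, dsum_eq_range d B l hBsupp] at hsum
  obtain ⟨hkl, hab⟩ := key d hd k l (fun i => A i) (fun i => B i) hAk hBl
    hAnorm hAirr hBnorm hBirr hsum
  ext i
  by_cases hik : i ≤ k
  · exact hab i hik
  · have hA0 : A i = 0 := by
      by_contra h; exact hik (hAsupp i h)
    have hB0 : B i = 0 := by
      by_contra h
      have := hBsupp i h
      omega
    rw [hA0, hB0]
end

section
/- Let d > 1 be an integer and let A and B be two normal d-collections. If span_d(A) = span_d(B), then A = B. -/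
namespace DCollection

variable {d : ℕ}

def partialSum (d : ℕ) (A : ℕ →₀ ℕ) (k : ℕ) : ℕ := ∑ i ∈ Finset.range k, A i * d ^ i

noncomputable def shift (K : ℕ) (A : ℕ →₀ ℕ) : ℕ →₀ ℕ :=
  Finsupp.comapDomain (· + K) A (add_left_injective K).injOn

@[simp]
lemma shift_apply (K : ℕ) (A : ℕ →₀ ℕ) (i : ℕ) : shift K A i = A (i + K) := rfl

lemma partialSum_mono (A : ℕ →₀ ℕ) : Monotone (partialSum d A) := fun _ _ h =>
  Finset.sum_le_sum_of_subset (Finset.range_subset_range.2 h)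

lemma partialSum_le_partialSum {c A : ℕ →₀ ℕ} (h : ∀ i, c i ≤ A i) (k : ℕ) :
    partialSum d c k ≤ partialSum d A k :=
  Finset.sum_le_sum fun i _ => Nat.mul_le_mul_right _ (h i)

lemma partialSum_succ (A : ℕ →₀ ℕ) (k : ℕ) :
    partialSum d A (k + 1) = partialSum d A k + A k * d ^ k :=
  Finset.sum_range_succ _ _

lemma partialSum_add (A : ℕ →₀ ℕ) (k j : ℕ) :
    partialSum d A (k + j) = partialSum d A k + d ^ k * partialSum d (shift k A) j := by
  rw [partialSum, partialSum, partialSum, Finset.sum_range_add, Finset.mul_sum]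
  congr 1
  refine Finset.sum_congr rfl fun i _ => ?_
  rw [shift_apply, add_comm i k, pow_add]
  ring

lemma partialSum_erase {A : ℕ →₀ ℕ} {K k : ℕ} (hk : k ≤ K) :
    partialSum d (A.erase K) k = partialSum d A k :=
  Finset.sum_congr rfl fun i hi => by
    rw [Finsupp.erase_ne (by simp at hi; omega)]

lemma exists_forall_ge_eq_zero (A : ℕ →₀ ℕ) : ∃ N, ∀ i, N ≤ i → A i = 0 := by
  obtain ⟨N, hN⟩ := A.support.exists_nat_subset_range
  refine ⟨N, fun i hi => Finsupp.notMem_support_iff.1 fun hmem => ?_⟩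
  have := Finset.mem_range.1 (hN hmem)
  omega

lemma dsum_eq_partialSum {A : ℕ →₀ ℕ} {N : ℕ} (hN : ∀ i, N ≤ i → A i = 0) :
    dsum d A = partialSum d A N :=
  Finsupp.sum_of_support_subset A
    (fun i hi => Finset.mem_range.2 <| by_contra fun h =>
      Finsupp.mem_support_iff.1 hi (hN i (by omega)))
    _ (fun _ _ => zero_mul _)

lemma dsum_add_single (c : ℕ →₀ ℕ) (K x : ℕ) :
    dsum d (c + Finsupp.single K x) = dsum d c + x * d ^ K := by
  rw [dsum, Finsupp.sum_add_index' (fun _ => zero_mul _) (fun _ _ _ => add_mul _ _ _),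
    Finsupp.sum_single_index (zero_mul _)]
  rfl

lemma zero_mem_dspan (A : ℕ →₀ ℕ) : 0 ∈ dspan d A :=
  ⟨0, fun _ => Nat.zero_le _, by simp⟩

lemma add_mul_pow_mem_dspan {A : ℕ →₀ ℕ} {K m x : ℕ} (hm : m ∈ dspan d (A.erase K))
    (hx : x ≤ A K) : m + x * d ^ K ∈ dspan d A := by
  obtain ⟨c, hc, rfl⟩ := hm
  refine ⟨c + Finsupp.single K x, fun i => ?_, (dsum_add_single c K x).symm⟩
  rcases eq_or_ne i K with rfl | hi
  · have := hc i
    simp only [Finsupp.erase_same, nonpos_iff_eq_zero] at this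
    simpa [this] using hx
  · simpa [Finsupp.single_eq_of_ne' hi.symm, Finsupp.erase_ne hi] using hc i

lemma mod_pow_le_partialSum_of_mem_dspan {A : ℕ →₀ ℕ} {n : ℕ} (hn : n ∈ dspan d A) (k : ℕ) :
    n % d ^ k ≤ partialSum d A k := by
  obtain ⟨c, hc, rfl⟩ := hn
  obtain ⟨N, hN⟩ := exists_forall_ge_eq_zero c
  have hsum : dsum d c = partialSum d c k + d ^ k * partialSum d (shift k c) N := by
    rw [← partialSum_add, dsum_eq_partialSum (N := k + N) fun i hi => hN i (by omega)]
  change dsum d c % d ^ k ≤ _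
  rw [hsum, Nat.add_mul_mod_self_left]
  exact (Nat.mod_le _ _).trans (partialSum_le_partialSum hc k)

lemma mem_dspan_of_le_partialSum (K : ℕ) :
    ∀ {A : ℕ →₀ ℕ} {n : ℕ}, n ≤ partialSum d A K →
      (∀ k < K, n % d ^ k ≤ partialSum d A k) → n ∈ dspan d A := by
  induction K with
  | zero =>
    intro A n hn _
    obtain rfl : n = 0 := by simpa [partialSum] using hn
    exact zero_mem_dspan A
  | succ K ih =>
    intro A n hn htest
    set x := min (A K) (n / d ^ K)
    have hxn : x * d ^ K ≤ n :=
      (Nat.mul_le_mul_right _ (min_le_right _ _)).trans (Nat.div_mul_le_self n _)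
    have hrest : n - x * d ^ K ≤ partialSum d A K := by
      rcases le_total (A K) (n / d ^ K) with h | h
      · rw [partialSum_succ] at hn
        rw [show x = A K from min_eq_left h]
        omega
      · rw [show x = n / d ^ K from min_eq_right h, ← Nat.mod_eq_sub_div_mul]
        exact htest K K.lt_succ_self
    have hmod : ∀ k < K, (n - x * d ^ K) % d ^ k = n % d ^ k := fun k hk => by
      obtain ⟨t, ht⟩ : d ^ k ∣ x * d ^ K := (pow_dvd_pow d hk.le).mul_left x
      have hn : n = n - x * d ^ K + d ^ k * t := by omega
      conv_rhs => rw [hn, Nat.add_mul_mod_self_left]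
    have hmem : n - x * d ^ K ∈ dspan d (A.erase K) := by
      refine ih ((partialSum_erase le_rfl).symm ▸ hrest) fun k hk => ?_
      rw [hmod k hk, partialSum_erase hk.le]
      exact htest k (Nat.lt_succ_of_lt hk)
    have := add_mul_pow_mem_dspan hmem (min_le_left (A K) (n / d ^ K))
    rwa [Nat.sub_add_cancel hxn] at this

lemma mem_dspan_iff (hd : 1 < d) {A : ℕ →₀ ℕ} {n : ℕ} :
    n ∈ dspan d A ↔ ∀ k, n % d ^ k ≤ partialSum d A k := by
  refine ⟨mod_pow_le_partialSum_of_mem_dspan, fun htest => ?_⟩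
  have hn : n ≤ partialSum d A n := by simpa [Nat.mod_eq_of_lt (Nat.lt_pow_self hd)] using htest n
  exact mem_dspan_of_le_partialSum n hn fun k _ => htest k

lemma partialSum_add_two_le (hd : 0 < d) {A : ℕ →₀ ℕ} (hA : ∀ i, A i ≤ 2 * (d - 1)) (k : ℕ) :
    partialSum d A k + 2 ≤ 2 * d ^ k := by
  induction k with
  | zero => simp [partialSum]
  | succ k ih =>
    have h : A k * d ^ k + 2 * d ^ k ≤ 2 * d ^ (k + 1) := by
      calc A k * d ^ k + 2 * d ^ k ≤ 2 * (d - 1) * d ^ k + 2 * d ^ k := by gcongr; exact hA k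
        _ = 2 * d ^ (k + 1) := by
          obtain ⟨e, rfl⟩ := Nat.exists_eq_add_of_lt hd
          simp only [zero_add, add_tsub_cancel_right, pow_succ]
          ring
    rw [partialSum_succ]
    omega

/-- On a saturated stretch (`d ^ k ≤ T_k + 1`) the normal bound pins `T_k + 1` in
`[d ^ k, 2 d ^ k)`, so `a_k` is read off `T_{k+1}`. -/
lemma partialSum_succ_add_one_div (hd : 0 < d) {A : ℕ →₀ ℕ} (hA : ∀ i, A i ≤ 2 * (d - 1))
    {k : ℕ} (hk : d ^ k ≤ partialSum d A k + 1) :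
    (partialSum d A (k + 1) + 1) / d ^ k = A k + 1 := by
  have hbound := partialSum_add_two_le hd hA k
  rw [partialSum_succ, add_right_comm, Nat.add_mul_div_right _ _ (pow_pos hd k),
    Nat.div_eq_of_lt_le (k := 1) (by omega) (by omega), add_comm]

lemma eq_of_saturated_of_partialSum_eq (hd : 0 < d) {A B : ℕ →₀ ℕ}
    (hA : ∀ i, A i ≤ 2 * (d - 1)) (hB : ∀ i, B i ≤ 2 * (d - 1)) (K : ℕ)
    (hsA : ∀ k < K, d ^ k ≤ partialSum d A k + 1) (hsB : ∀ k < K, d ^ k ≤ partialSum d B k + 1)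
    (hT : partialSum d A K = partialSum d B K) : ∀ i < K, A i = B i := by
  induction K with
  | zero => simp
  | succ K ih =>
    have hK : A K = B K := by
      have := partialSum_succ_add_one_div hd hA (hsA K K.lt_succ_self)
      rw [hT, partialSum_succ_add_one_div hd hB (hsB K K.lt_succ_self)] at this
      omega
    have hTK : partialSum d A K = partialSum d B K := by
      rw [partialSum_succ, partialSum_succ, hK] at hT
      omega
    intro i hi
    rcases Nat.lt_succ_iff_lt_or_eq.1 hi with hi | rfl
    · exact ih (fun k hk => hsA k (by omega)) (fun k hk => hsB k (by omega)) hTK i hi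
    · exact hK

lemma mem_dspan_shift_iff (hd : 1 < d) {A : ℕ →₀ ℕ} {K : ℕ} (hT : partialSum d A K < d ^ K)
    (n : ℕ) : n ∈ dspan d (shift K A) ↔ d ^ K * n ∈ dspan d A := by
  have hmod (j : ℕ) : d ^ K * n % d ^ (K + j) = d ^ K * (n % d ^ j) := by
    rw [pow_add, Nat.mul_mod_mul_left]
  have hcancel (x y : ℕ) : d ^ K * x ≤ partialSum d A K + d ^ K * y ↔ x ≤ y := by
    refine ⟨fun h => Nat.lt_succ_iff.1 (Nat.lt_of_mul_lt_mul_left (a := d ^ K) ?_),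
      fun h => le_add_left (Nat.mul_le_mul_left _ h)⟩
    rw [Nat.mul_succ]
    omega
  rw [mem_dspan_iff hd, mem_dspan_iff hd]
  refine ⟨fun h k => ?_, fun h j => ?_⟩
  · rcases le_or_gt k K with hk | hk
    · rw [Nat.mod_eq_zero_of_dvd ((pow_dvd_pow d hk).mul_right n)]
      exact Nat.zero_le _
    · obtain ⟨j, rfl⟩ := Nat.exists_eq_add_of_le hk.le
      rw [hmod, partialSum_add, hcancel]
      exact h j
  · rw [← hcancel, ← hmod, ← partialSum_add]
    exact h (K + j)

def IsFirstGap (d : ℕ) (A : ℕ →₀ ℕ) (K : ℕ) : Prop :=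
  (∀ k < K, d ^ k ≤ partialSum d A k + 1) ∧ partialSum d A K + 1 < d ^ K

lemma exists_isFirstGap (hd : 1 < d) (A : ℕ →₀ ℕ) : ∃ K, IsFirstGap d A K := by
  have hgap : ∃ K, partialSum d A K + 1 < d ^ K := by
    obtain ⟨N, hN⟩ := exists_forall_ge_eq_zero A
    refine ⟨N + partialSum d A N + 2, lt_of_le_of_lt ?_ (Nat.lt_pow_self hd)⟩
    rw [← dsum_eq_partialSum hN, ← dsum_eq_partialSum fun i hi => hN i (by omega)]
    omega
  exact ⟨Nat.find hgap, fun k hk => not_lt.1 (Nat.find_min hgap hk), Nat.find_spec hgap⟩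

namespace IsFirstGap

variable {A : ℕ →₀ ℕ} {K : ℕ}

lemma isLeast_notMem_dspan (hd : 1 < d) (hK : IsFirstGap d A K) :
    IsLeast {n | n ∉ dspan d A} (partialSum d A K + 1) := by
  refine ⟨fun hmem => ?_, fun n hn => not_lt.1 fun hlt => hn ?_⟩
  · have := mod_pow_le_partialSum_of_mem_dspan hmem K
    rw [Nat.mod_eq_of_lt hK.2] at this
    omega
  · refine (mem_dspan_iff hd).2 fun k => ?_
    rcases lt_or_ge k K with hk | hk
    · have := Nat.mod_lt n (pow_pos (by omega : 0 < d) k)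
      have := hK.1 k hk
      omega
    · exact (Nat.mod_le _ _).trans ((Nat.lt_succ_iff.1 hlt).trans (partialSum_mono A hk))

lemma eq_log (hK : IsFirstGap d A K) : K = Nat.log d (partialSum d A K + 1) + 1 := by
  obtain ⟨hsat, hgap⟩ := hK
  cases K with
  | zero => simp [partialSum] at hgap
  | succ k =>
    have : partialSum d A k ≤ partialSum d A (k + 1) := partialSum_mono A (by omega)
    rw [Nat.log_eq_of_pow_le_of_lt_pow ((hsat k k.lt_succ_self).trans (by omega)) hgap]

end IsFirstGap

theorem eq_of_dspan_eq_of_forall_ge_eq_zero (hd : 1 < d) (N : ℕ) :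
    ∀ {A B : ℕ →₀ ℕ}, (∀ i, A i ≤ 2 * (d - 1)) → (∀ i, B i ≤ 2 * (d - 1)) →
      (∀ i, N ≤ i → A i = 0) → (∀ i, N ≤ i → B i = 0) → dspan d A = dspan d B → A = B := by
  induction N with
  | zero =>
    intro A B _ _ hA0 hB0 _
    ext i
    rw [hA0 i i.zero_le, hB0 i i.zero_le]
  | succ N ih =>
    intro A B hA hB hA0 hB0 h
    obtain ⟨K, hKA⟩ := exists_isFirstGap hd A
    obtain ⟨K', hKB⟩ := exists_isFirstGap hd B
    have hT : partialSum d A K = partialSum d B K' := by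
      have := (hKA.isLeast_notMem_dspan hd).unique (h ▸ hKB.isLeast_notMem_dspan hd)
      omega
    obtain rfl : K = K' := by rw [hKA.eq_log, hKB.eq_log, hT]
    have hlow := eq_of_saturated_of_partialSum_eq (by omega) hA hB K hKA.1 hKB.1 hT
    have hK : 0 < K := by rw [hKA.eq_log]; omega
    have hhigh : shift K A = shift K B := by
      refine ih (fun i => hA _) (fun i => hB _) (fun i hi => hA0 (i + K) (by omega))
        (fun i hi => hB0 (i + K) (by omega)) (Set.ext fun n => ?_)
      rw [mem_dspan_shift_iff hd (Nat.lt_of_succ_lt hKA.2),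
        mem_dspan_shift_iff hd (Nat.lt_of_succ_lt hKB.2), h]
    ext i
    rcases lt_or_ge i K with hi | hi
    · exact hlow i hi
    · obtain ⟨j, rfl⟩ := Nat.exists_eq_add_of_le' hi
      exact DFunLike.congr_fun hhigh j

end DCollection

/-- Two normal `d`-collections with the same span are equal. -/
theorem stmt_10 (d : ℕ) (hd : 1 < d) (A B : ℕ →₀ ℕ)
    (hA : ∀ i, A i ≤ 2 * (d - 1)) (hB : ∀ i, B i ≤ 2 * (d - 1))
    (h : dspan d A = dspan d B) : A = B := by
  obtain ⟨NA, hNA⟩ := DCollection.exists_forall_ge_eq_zero A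
  obtain ⟨NB, hNB⟩ := DCollection.exists_forall_ge_eq_zero B
  exact DCollection.eq_of_dspan_eq_of_forall_ge_eq_zero hd (NA + NB) hA hB
    (fun i hi => hNA i (by omega)) (fun i hi => hNB i (by omega)) h
end
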